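/- arXiv:1904.03687 — 4 statements merged into one kernel-verified Lean document; each statement's English description precedes it below -/
import Mathlib

section
/- Let K be a field of characteristic p > 0 and L/K a finite separable extension. Then the ring L ⊗_{K, Frob} K, where the second factor is viewed as a K-algebra via the Frobenius x ↦ x^p, is a field which is a purely inseparable extension of L (under the map a ↦ a ⊗ 1). -/
/-!
A separable extension is formally unramified, so its base change `L ⊗[K] F` to any field `F`
is reduced. Over the Frobenius twist every `p`-th power of a pure tensor `a ⊗ b` equals
`(b • a ^ p) ⊗ 1`, and `p`-th powers are additive, so every `p`-th power lies in `L ⊗ 1`.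
A reduced ring in which the `p`-th powers of all elements lie in a subfield is a field: a
nonzero `x` has a nonzero `x ^ p = a ⊗ 1`, and `x ^ (p - 1) * (a⁻¹ ⊗ 1)` inverts it.
-/

open TensorProduct

/-- `K` viewed as a `K`-algebra via the Frobenius `x ↦ x^p`. -/
def FrobTwist (K : Type*) (_p : ℕ) : Type _ := K

instance (K : Type*) (p : ℕ) [Field K] : Field (FrobTwist K p) := inferInstanceAs (Field K)

noncomputable instance (K : Type*) (p : ℕ) [Field K] [Fact p.Prime] [CharP K p] :
    Algebra K (FrobTwist K p) := (frobenius K p).toAlgebra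

theorem isReduced_tensorProduct_of_isSeparable (K L F : Type*) [Field K] [Field L] [Field F]
    [Algebra K L] [Algebra K F] [FiniteDimensional K L] [Algebra.IsSeparable K L] :
    IsReduced (L ⊗[K] F) := by
  have : Algebra.FormallyUnramified K L := .of_isSeparable K L
  have : IsReduced (F ⊗[K] L) := Algebra.FormallyUnramified.isReduced_of_field F _
  exact isReduced_of_injective _ (Algebra.TensorProduct.comm K L F).injective

theorem TensorProduct.exists_pow_char_eq_tmul_one {K A B : Type*} [Field K] [CommRing A]
    [CommRing B] [Algebra K A] [Algebra K B] (p : ℕ) [Fact p.Prime] [CharP K p]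
    (hB : ∀ b : B, ∃ k : K, b ^ p = algebraMap K B k) (x : A ⊗[K] B) :
    ∃ a : A, x ^ p = a ⊗ₜ 1 := by
  rcases subsingleton_or_nontrivial (A ⊗[K] B) with _ | _
  · exact ⟨0, Subsingleton.elim _ _⟩
  have : CharP (A ⊗[K] B) p := charP_of_injective_algebraMap (algebraMap K _).injective p
  induction x using TensorProduct.induction_on with
  | zero => exact ⟨0, by rw [zero_pow (Fact.out : p.Prime).ne_zero, zero_tmul]⟩
  | tmul a b =>
    obtain ⟨k, hk⟩ := hB b
    refine ⟨k • a ^ p, ?_⟩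
    rw [Algebra.TensorProduct.tmul_pow, hk, Algebra.algebraMap_eq_smul_one, tmul_smul,
      smul_tmul']
  | add x y hx hy =>
    obtain ⟨a, ha⟩ := hx
    obtain ⟨b, hb⟩ := hy
    exact ⟨a + b, by rw [add_pow_char, ha, hb, add_tmul]⟩

theorem isField_of_isReduced_of_forall_pow_mem_range {R F : Type*} [CommRing R] [Nontrivial R]
    [IsReduced R] [Field F] (f : F →+* R) {n : ℕ} (hn : n ≠ 0)
    (h : ∀ x : R, ∃ a : F, x ^ n = f a) : IsField R := by
  refine ⟨exists_pair_ne R, mul_comm, fun {x} hx => ?_⟩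
  obtain ⟨a, ha⟩ := h x
  have ha0 : a ≠ 0 := by
    rintro rfl
    rw [map_zero] at ha
    exact hx (IsNilpotent.eq_zero ⟨n, ha⟩)
  refine ⟨x ^ (n - 1) * f a⁻¹, ?_⟩
  rw [← mul_assoc, ← pow_succ', Nat.sub_add_cancel (Nat.one_le_iff_ne_zero.mpr hn), ha,
    ← map_mul, mul_inv_cancel₀ ha0, map_one]

/-- `L ⊗_{K, Frob} K` is a field, purely inseparable over `L` via `a ↦ a ⊗ 1`. -/
theorem stmt1 (p : ℕ) [Fact p.Prime] (K L : Type*) [Field K] [Field L] [Algebra K L]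
    [CharP K p] [FiniteDimensional K L] [Algebra.IsSeparable K L] :
    IsField (L ⊗[K] FrobTwist K p) ∧
      ∀ x : L ⊗[K] FrobTwist K p, ∃ (n : ℕ) (a : L),
        x ^ p ^ n = a ⊗ₜ[K] (1 : FrobTwist K p) := by
  have : IsReduced (L ⊗[K] FrobTwist K p) := isReduced_tensorProduct_of_isSeparable K L _
  have hpow (x : L ⊗[K] FrobTwist K p) : ∃ a : L, x ^ p = a ⊗ₜ 1 :=
    exists_pow_char_eq_tmul_one (K := K) p (fun _ => ⟨_, rfl⟩) x
  refine ⟨isField_of_isReduced_of_forall_pow_mem_range Algebra.TensorProduct.includeLeftRingHom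
    (Fact.out : p.Prime).ne_zero hpow, fun x => ?_⟩
  obtain ⟨a, ha⟩ := hpow x
  exact ⟨1, a, by rwa [pow_one]⟩
end

section
/- Let K be a field of characteristic p > 0 with [K : K^p] finite, and let E be an intermediate field with K^p ⊆ E ⊆ K. Then the canonical surjection Ω_{K/K^p} → Ω_{K/E} is an isomorphism if and only if E = K^p. -/
/-!
If `D x = 0` in `Ω[K⁄K^p]` then `x ∈ K^p`: otherwise take, by Zorn, an intermediate field `F`
maximal among those not containing `x`. Every `y ∉ F` has degree `p` over `F` with minimal
polynomial `X ^ p - y ^ p`, and `x ∈ F⟮y⟯` by maximality, so `F⟮y⟯ = F⟮x⟯`; hence `K = F⟮x⟯`.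
Since the derivative of `X ^ p - x ^ p` vanishes, `d/dX` descends to a derivation of
`K = F[X]/(X ^ p - x ^ p)` sending `x` to `1`. Thus the map `Ω[K⁄K^p] → Ω[K⁄E]`, which kills
`D x` for `x ∈ E`, is injective only if `E = K^p`; conversely its kernel is spanned by the
image of `Ω[E⁄K^p]`, which vanishes when `E = K^p`.
-/

open Polynomial IntermediateField

theorem IsCompactElement.exists_maximal_not_le {α : Type*} [CompleteLattice α] {k : α}
    (hk : IsCompactElement k) (hbot : ¬k ≤ ⊥) : ∃ m, Maximal (fun a => ¬k ≤ a) m :=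
  zorn_le₀ _ fun c hcs hc => by
    rcases c.eq_empty_or_nonempty with rfl | hne
    · exact ⟨⊥, hbot, by simp⟩
    refine ⟨sSup c, fun hle => ?_, fun _ => le_sSup⟩
    obtain ⟨a, hac, hka⟩ := (CompleteLattice.isCompactElement_iff_le_of_directed_sSup_le α k).mp
      hk c hne hc.directedOn hle
    exact hcs hac hka

namespace KaehlerDifferential

theorem map_injective_of_surjective {R A B : Type*} [CommRing R] [CommRing A] [CommRing B]
    [Algebra R A] [Algebra A B] [Algebra R B] [IsScalarTower R A B]
    (h : Function.Surjective (algebraMap R A)) : Function.Injective (map R A B B) := by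
  have := subsingleton_of_surjective R A h
  rw [← LinearMap.ker_eq_bot, ← range_mapBaseChange, LinearMap.range_eq_bot]
  exact Subsingleton.elim _ _

end KaehlerDifferential

theorem isIntegral_of_pow_mem_range {F K : Type*} [CommRing F] [Ring K] [Algebra F K] {y : K}
    {n : ℕ} (hn : 0 < n) (hyn : y ^ n ∈ (algebraMap F K).range) : IsIntegral F y := by
  obtain ⟨c, hc⟩ := hyn
  exact IsIntegral.of_pow hn (hc ▸ isIntegral_algebraMap)

variable {p : ℕ} [hp : Fact p.Prime]

section CharP

variable {F K : Type*} [Field F] [Field K] [Algebra F K] [CharP K p]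

theorem minpoly_eq_X_pow_sub_C_of_notMem_range {y : K} {c : F}
    (hy : y ∉ (algebraMap F K).range) (hc : algebraMap F K c = y ^ p) :
    minpoly F y = X ^ p - C c := by
  have hirr : Irreducible (X ^ p - C c) :=
    X_pow_sub_C_irreducible_of_prime hp.out fun b hb =>
      hy ⟨b, frobenius_inj K p (by simp [frobenius_def, ← map_pow, hb, hc])⟩
  exact (minpoly.eq_of_irreducible_of_monic hirr (by simp [hc])
    (monic_X_pow_sub_C c hp.out.ne_zero)).symm

theorem finrank_adjoin_simple_of_pow_mem_range {y : K} (hy : y ∉ (algebraMap F K).range)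
    (hyp : y ^ p ∈ (algebraMap F K).range) : Module.finrank F F⟮y⟯ = p := by
  obtain ⟨c, hc⟩ := hyp
  rw [adjoin.finrank (isIntegral_of_pow_mem_range hp.out.pos ⟨c, hc⟩),
    minpoly_eq_X_pow_sub_C_of_notMem_range hy hc, natDegree_X_pow_sub_C]

theorem exists_derivation_apply_eq_one_of_adjoin_eq_top {x : K}
    (hx : x ∉ (algebraMap F K).range) (hxp : x ^ p ∈ (algebraMap F K).range)
    (htop : F⟮x⟯ = ⊤) : ∃ δ : Derivation F K K, δ x = 1 := by
  obtain ⟨c, hc⟩ := hxp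
  have : CharP F p := (algebraMap F K).charP (algebraMap F K).injective p
  have hsurj : Function.Surjective (aeval x : F[X] →ₐ[F] K) := by
    rwa [← AlgHom.range_eq_top, ← Algebra.adjoin_singleton_eq_range_aeval,
      ← adjoin_simple_eq_top_iff_of_isAlgebraic
        (isIntegral_of_pow_mem_range hp.out.pos ⟨c, hc⟩).isAlgebraic]
  have hd : ∀ g : F[X], aeval x g = 0 → aeval x (derivative' g) = 0 := by
    intro g hg
    obtain ⟨q, rfl⟩ := minpoly.dvd F x hg
    have hder : derivative (minpoly F x) = 0 := by
      simp [minpoly_eq_X_pow_sub_C_of_notMem_range hx hc, derivative_X_pow, CharP.cast_eq_zero]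
    simp [hder]
  exact ⟨Derivation.liftOfSurjective hsurj hd, by
    simpa using Derivation.liftOfSurjective_apply hsurj hd X⟩

end CharP

section PurelyInseparable

variable {k K : Type*} [Field k] [Field K] [Algebra k K] [CharP K p]

theorem adjoin_simple_eq_top_of_maximal_notMem {F : IntermediateField k K}
    (hpF : ∀ z : K, z ^ p ∈ (algebraMap F K).range) {x : K}
    (hF : Maximal (fun F : IntermediateField k K => x ∉ F) F) : F⟮x⟯ = ⊤ := by
  have hxF : x ∉ (algebraMap F K).range := by simp [hF.prop]
  rw [eq_top_iff]
  intro y _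
  by_cases hy : y ∈ F
  · exact F⟮x⟯.algebraMap_mem ⟨y, hy⟩
  have hyF : y ∉ (algebraMap F K).range := by simpa using hy
  have hlt : F < F⟮y⟯.restrictScalars k :=
    SetLike.lt_iff_le_and_exists.mpr
      ⟨fun z hz => F⟮y⟯.algebraMap_mem ⟨z, hz⟩, y, mem_adjoin_simple_self F y, hy⟩
  have hxy : F⟮x⟯ ≤ F⟮y⟯ := adjoin_simple_le_iff.mpr (not_not.mp (hF.not_prop_of_gt hlt))
  have := adjoin.finiteDimensional (isIntegral_of_pow_mem_range hp.out.pos (hpF y))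
  have heq : F⟮x⟯ = F⟮y⟯ := eq_of_le_of_finrank_eq hxy <| by
    rw [finrank_adjoin_simple_of_pow_mem_range hxF (hpF x),
      finrank_adjoin_simple_of_pow_mem_range hyF (hpF y)]
  exact heq ▸ mem_adjoin_simple_self F y

theorem exists_derivation_apply_eq_one (hpow : ∀ z : K, z ^ p ∈ (algebraMap k K).range) {x : K}
    (hx : x ∉ (algebraMap k K).range) : ∃ δ : Derivation k K K, δ x = 1 := by
  obtain ⟨F, hF⟩ : ∃ F : IntermediateField k K, Maximal (fun F => x ∉ F) F := by
    simpa only [adjoin_simple_le_iff] using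
      (adjoin_simple_isCompactElement x).exists_maximal_not_le
        (by simpa [adjoin_simple_le_iff, mem_bot] using hx)
  have hpF (z : K) : z ^ p ∈ (algebraMap F K).range := by
    obtain ⟨a, ha⟩ := hpow z
    exact ⟨⟨z ^ p, ha ▸ F.algebraMap_mem a⟩, rfl⟩
  obtain ⟨δ, hδ⟩ := exists_derivation_apply_eq_one_of_adjoin_eq_top (by simp [hF.prop])
    (hpF x) (adjoin_simple_eq_top_of_maximal_notMem hpF hF)
  exact ⟨δ.restrictScalars k, hδ⟩

theorem KaehlerDifferential.D_eq_zero_iff_mem_range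
    (hpow : ∀ z : K, z ^ p ∈ (algebraMap k K).range) {x : K} :
    KaehlerDifferential.D k K x = 0 ↔ x ∈ (algebraMap k K).range := by
  refine ⟨fun hD => ?_, ?_⟩
  · by_contra hx
    obtain ⟨δ, hδ⟩ := exists_derivation_apply_eq_one hpow hx
    have := δ.liftKaehlerDifferential_comp_D x
    rw [hD, map_zero, hδ] at this
    exact zero_ne_one this
  · rintro ⟨a, rfl⟩
    exact (KaehlerDifferential.D k K).map_algebraMap a

end PurelyInseparable

theorem stmt4_general (p : ℕ) [Fact p.Prime] (K : Type*) [Field K] [CharP K p]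
    (E : Subfield K) (hE : (frobenius K p).fieldRange ≤ E) :
    (letI : Algebra ↥(frobenius K p).fieldRange ↥E := (Subfield.inclusion hE).toAlgebra
     letI : IsScalarTower ↥(frobenius K p).fieldRange ↥E K :=
       IsScalarTower.of_algebraMap_eq fun x => rfl
     Function.Bijective (KaehlerDifferential.map ↥(frobenius K p).fieldRange ↥E K K))
      ↔ E = (frobenius K p).fieldRange := by
  let : Algebra ↥(frobenius K p).fieldRange ↥E := (Subfield.inclusion hE).toAlgebra
  let : IsScalarTower ↥(frobenius K p).fieldRange ↥E K :=
    IsScalarTower.of_algebraMap_eq fun x => rfl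
  constructor
  · intro hbij
    refine le_antisymm (fun x hxE => ?_) hE
    have hD : KaehlerDifferential.D (frobenius K p).fieldRange K x = 0 := by
      apply hbij.injective
      rw [KaehlerDifferential.map_D, map_zero]
      exact (KaehlerDifferential.D E K).map_algebraMap ⟨x, hxE⟩
    obtain ⟨⟨y, hy⟩, rfl⟩ :=
      (KaehlerDifferential.D_eq_zero_iff_mem_range (fun z => ⟨⟨z ^ p, z, rfl⟩, rfl⟩)).mp hD
    exact hy
  · rintro rfl
    exact ⟨KaehlerDifferential.map_injective_of_surjective fun z => ⟨z, rfl⟩,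
      KaehlerDifferential.map_surjective _ _ _⟩

/-- Let `K` be a field of characteristic `p > 0` with `[K : K^p]` finite and
`K^p ⊆ E ⊆ K`.  The canonical surjection `Ω_{K/K^p} → Ω_{K/E}` is an isomorphism
if and only if `E = K^p`. -/
theorem stmt4 (p : ℕ) [Fact p.Prime] (K : Type*) [Field K] [CharP K p]
    (E : Subfield K) (hE : (frobenius K p).fieldRange ≤ E)
    (hfin : FiniteDimensional (↥(frobenius K p).fieldRange) K) :
    (letI : Algebra ↥(frobenius K p).fieldRange ↥E := (Subfield.inclusion hE).toAlgebra
     letI : IsScalarTower ↥(frobenius K p).fieldRange ↥E K :=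
       IsScalarTower.of_algebraMap_eq fun x => rfl
     Function.Bijective (KaehlerDifferential.map ↥(frobenius K p).fieldRange ↥E K K))
      ↔ E = (frobenius K p).fieldRange :=
  stmt4_general p K E hE
end

section
/- Let R be a noetherian normal domain with fraction field K, and let M, N be finite free R-modules. A K-linear map m : M ⊗_R K → N ⊗_R K arises from an R-linear map M → N if and only if for every height-one prime 𝔭 of R, the map m carries the image of M ⊗_R R_𝔭 into the image of N ⊗_R R_𝔭. -/
/-!
Only the converse needs work, and it reduces to the algebraic Hartogs property of a noetherian
normal domain: an element `a ∈ K` lying in `R_𝔭` for every height-one prime `𝔭` lies in `R`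
(for free `N`, apply it to the coordinates of `m (1 ⊗ x)`). If `a ∉ R`, the class of `a` in
`K / R` has an associated prime `P = (R : b)` containing `(R : a)`, with `b ∉ R`. No nonzero
ideal `I ⊆ P` satisfies `b I ⊆ I`, since `b` would then be integral over `R`. Applied to `I = P`,
this gives `t ∈ P` with `u = t b ∈ R \ P`; a prime `0 ≠ q ⊊ P` cannot contain `t`, and then
`b q ⊆ q`, a contradiction. So `P` has height one and `a ∉ R_P`.
-/

open TensorProduct

open IsLocalization

open scoped nonZeroDivisors

theorem Submodule.colon_mkQ_singleton {R M : Type*} [Ring R] [AddCommGroup M] [Module R M]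
    (N : Submodule R M) (x : M) :
    (⊥ : Submodule R (M ⧸ N)).colon {N.mkQ x} = N.colon {x} := by
  ext r
  simp only [mem_colon_singleton, mem_bot, mkQ_apply, ← Quotient.mk_smul, Quotient.mk_eq_zero]

theorem LinearMap.exists_comp_eq_of_injective {R M N P : Type*} [Semiring R] [AddCommMonoid M]
    [Module R M] [AddCommMonoid N] [Module R N] [AddCommMonoid P] [Module R P]
    {ι : N →ₗ[R] P} (hι : Function.Injective ι) {g : M →ₗ[R] P} (hg : range g ≤ range ι) :
    ∃ f : M →ₗ[R] N, ι ∘ₗ f = g :=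
  ⟨(LinearEquiv.ofInjective ι hι).symm ∘ₗ g.codRestrict _ fun x ↦ hg ⟨x, rfl⟩, by ext; simp⟩

section

variable {R K : Type*} [CommRing R] [Field K] [Algebra R K] [IsFractionRing R K]

theorem IsFractionRing.colon_one_singleton_ne_bot [IsDomain R] (b : K) :
    (1 : Submodule R K).colon {b} ≠ ⊥ := by
  obtain ⟨⟨y, hy⟩, hyb⟩ := exists_integer_multiple R⁰ b
  refine Submodule.ne_bot_iff _ |>.mpr ⟨y, ?_, nonZeroDivisors.ne_zero hy⟩
  exact Submodule.mem_colon_singleton.mpr (Submodule.mem_one.mpr hyb)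

namespace IsIntegrallyClosed

variable [IsIntegrallyClosed R]

theorem mem_one_of_mul_mem_coeSubmodule
    {I : Ideal R} (hI : I ≠ ⊥) (hfg : I.FG) {b : K}
    (hb : ∀ y ∈ coeSubmodule K I, b * y ∈ coeSubmodule K I) : b ∈ (1 : Submodule R K) := by
  have hI' : coeSubmodule K I ≠ ⊥ := by
    rwa [← coeSubmodule_bot K, Ne, (IsFractionRing.coeSubmodule_injective R K).eq_iff]
  exact Submodule.mem_one.mpr <| IsIntegrallyClosed.isIntegral_iff.mp <|
    isIntegral_of_smul_mem_submodule _ hI' (Submodule.FG.map _ hfg) b hb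

variable [IsDomain R] [IsNoetherianRing R]

theorem eq_bot_of_lt_colon_one_singleton {b : K} (hb : b ∉ (1 : Submodule R K)) {q : Ideal R}
    (hq : q.IsPrime) (hqP : q < (1 : Submodule R K).colon {b}) : q = ⊥ := by
  set P := (1 : Submodule R K).colon {b}
  have cross {r s x y : R} (hx : algebraMap R K x = r • b) (hy : algebraMap R K y = s • b) :
      s * x = r * y :=
    IsFractionRing.injective R K <| by
      simp only [map_mul, hx, hy, Algebra.smul_def]; ring
  have escape (I : Ideal R) (hI : I ≠ ⊥) (hIP : I ≤ P) :
      ∃ w ∈ I, ∃ v, algebraMap R K v = w • b ∧ v ∉ I := by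
    by_contra! h
    refine hb (mem_one_of_mul_mem_coeSubmodule hI (IsNoetherian.noetherian I) ?_)
    rintro _ ⟨w, hw, rfl⟩
    obtain ⟨v, hv⟩ := Submodule.mem_one.mp (Submodule.mem_colon_singleton.mp (hIP hw))
    exact ⟨v, h w hw v hv, by simp [hv, Algebra.smul_def, mul_comm]⟩
  obtain ⟨t, htP, u, hu, huP⟩ := escape P (IsFractionRing.colon_one_singleton_ne_bot b) le_rfl
  have htq : t ∉ q := fun htq ↦ hqP.not_ge fun r hr ↦ by
    obtain ⟨v, hv⟩ := Submodule.mem_one.mp (Submodule.mem_colon_singleton.mp hr)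
    have hru : r * u ∈ q := cross hu hv ▸ q.mul_mem_right v htq
    exact (hq.mem_or_mem hru).resolve_right fun h ↦ huP (hqP.le h)
  by_contra hq0
  obtain ⟨w, hwq, v, hv, hvq⟩ := escape q hq0 hqP.le
  exact hvq ((hq.mem_or_mem (cross hu hv ▸ q.mul_mem_right u hwq)).resolve_left htq)

theorem exists_heightOne_colon_one_singleton_le {a : K}
    (ha : a ∉ (1 : Submodule R K)) :
    ∃ p : Ideal R, p.IsPrime ∧ p ≠ ⊥ ∧ (∀ q : Ideal R, q.IsPrime → q < p → q = ⊥) ∧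
      (1 : Submodule R K).colon {a} ≤ p := by
  have hmk : (1 : Submodule R K).mkQ a ≠ 0 := by simpa using ha
  obtain ⟨P, hP, hle⟩ := exists_le_isAssociatedPrime_of_isNoetherianRing R _ hmk
  obtain ⟨hPprime, y, rfl⟩ := isAssociatedPrime_iff.mp hP
  obtain ⟨b, rfl⟩ := (1 : Submodule R K).mkQ_surjective y
  simp only [Submodule.colon_mkQ_singleton] at hPprime hle
  have hb : b ∉ (1 : Submodule R K) := fun hb ↦ hPprime.ne_top <|
    (Ideal.eq_top_iff_one _).mpr (Submodule.mem_colon_singleton.mpr (by rwa [one_smul]))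
  exact ⟨_, hPprime, IsFractionRing.colon_one_singleton_ne_bot b, fun q hq hqP ↦
    eq_bot_of_lt_colon_one_singleton hb hq hqP, hle⟩

theorem mem_one_of_forall_heightOne {a : K}
    (H : ∀ p : Ideal R, p.IsPrime → p ≠ ⊥ → (∀ q : Ideal R, q.IsPrime → q < p → q = ⊥) →
      ∃ s ∉ p, s • a ∈ (1 : Submodule R K)) :
    a ∈ (1 : Submodule R K) := by
  by_contra ha
  obtain ⟨p, hp, hp0, hp1, hle⟩ := exists_heightOne_colon_one_singleton_le ha
  obtain ⟨s, hs, hsa⟩ := H p hp hp0 hp1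
  exact hs (hle (Submodule.mem_colon_singleton.mpr hsa))

theorem exists_one_tmul_eq_of_forall_heightOne {N : Type*} [AddCommGroup N]
    [Module R N] [Module.Free R N] [Module.Finite R N] {y : K ⊗[R] N}
    (H : ∀ p : Ideal R, p.IsPrime → p ≠ ⊥ → (∀ q : Ideal R, q.IsPrime → q < p → q = ⊥) →
      ∃ s ∉ p, ∃ n : N, algebraMap R K s • y = 1 ⊗ₜ n) :
    ∃ n : N, y = 1 ⊗ₜ n := by
  let b := Module.Free.chooseBasis R N
  have coord (n : N) (i) : (b.baseChange K).repr (1 ⊗ₜ n) i = algebraMap R K (b.repr n i) := by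
    simp [Algebra.smul_def]
  have hy (i) : (b.baseChange K).repr y i ∈ (1 : Submodule R K) :=
    mem_one_of_forall_heightOne fun p hp hp0 hp1 ↦ by
      obtain ⟨s, hs, n, hn⟩ := H p hp hp0 hp1
      refine ⟨s, hs, Submodule.mem_one.mpr ⟨b.repr n i, ?_⟩⟩
      rw [← coord, ← hn, map_smul, Finsupp.smul_apply, algebraMap_smul]
  choose v hv using fun i ↦ Submodule.mem_one.mp (hy i)
  refine ⟨b.repr.symm (Finsupp.equivFunOnFinite.symm v), (b.baseChange K).repr.injective ?_⟩
  ext i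
  simp [coord, hv]

end IsIntegrallyClosed

end

theorem stmt7_general (R K M N : Type*) [CommRing R] [IsDomain R] [IsNoetherianRing R]
    [IsIntegrallyClosed R] [Field K] [Algebra R K] [IsFractionRing R K]
    [AddCommGroup M] [Module R M]
    [AddCommGroup N] [Module R N] [Module.Free R N] [Module.Finite R N]
    (m : K ⊗[R] M →ₗ[K] K ⊗[R] N) :
    (∃ f : M →ₗ[R] N, ∀ x : M, m (1 ⊗ₜ x) = 1 ⊗ₜ f x) ↔
      (∀ p : Ideal R, p.IsPrime → p ≠ ⊥ →
        (∀ q : Ideal R, q.IsPrime → q < p → q = ⊥) →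
        ∀ x : K ⊗[R] M,
          (∃ s : R, s ∉ p ∧ ∃ m₀ : M, algebraMap R K s • x = 1 ⊗ₜ m₀) →
          ∃ s : R, s ∉ p ∧ ∃ n₀ : N, algebraMap R K s • m x = 1 ⊗ₜ n₀) := by
  constructor
  · rintro ⟨f, hf⟩ p - - - x ⟨s, hs, m₀, hx⟩
    exact ⟨s, hs, f m₀, by rw [← map_smul, hx, hf]⟩
  · intro H
    have hrange : LinearMap.range (m.restrictScalars R ∘ₗ TensorProduct.mk R K M 1) ≤
        LinearMap.range (TensorProduct.mk R K N 1) := by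
      rintro _ ⟨x, rfl⟩
      obtain ⟨n, hn⟩ := IsIntegrallyClosed.exists_one_tmul_eq_of_forall_heightOne fun p hp hp0 hp1 ↦
        H p hp hp0 hp1 (1 ⊗ₜ x) ⟨1, hp.one_notMem, x, by rw [map_one, one_smul]⟩
      exact ⟨n, hn.symm⟩
    obtain ⟨f, hf⟩ :=
      LinearMap.exists_comp_eq_of_injective (Module.Flat.tensorProduct_mk_injective R N K) hrange
    exact ⟨f, fun x ↦ (LinearMap.congr_fun hf x).symm⟩

/-- Let `R` be a noetherian normal domain with fraction field `K`, and `M`, `N` finite free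
`R`-modules.  A `K`-linear map `m : M ⊗ K → N ⊗ K` (realised as `K ⊗[R] M →ₗ[K] K ⊗[R] N`)
arises from an `R`-linear map `M → N` iff for every height-one prime `𝔭` it carries the
image of `M ⊗ R_𝔭` into the image of `N ⊗ R_𝔭` (an element lies in the image of `M ⊗ R_𝔭`
iff some `s ∉ 𝔭` clears its denominators into the image of `M`). -/
theorem stmt7 (R K M N : Type*) [CommRing R] [IsDomain R] [IsNoetherianRing R]
    [IsIntegrallyClosed R] [Field K] [Algebra R K] [IsFractionRing R K]
    [AddCommGroup M] [Module R M] [Module.Free R M] [Module.Finite R M]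
    [AddCommGroup N] [Module R N] [Module.Free R N] [Module.Finite R N]
    (m : K ⊗[R] M →ₗ[K] K ⊗[R] N) :
    (∃ f : M →ₗ[R] N, ∀ x : M, m (1 ⊗ₜ x) = 1 ⊗ₜ f x) ↔
      (∀ p : Ideal R, p.IsPrime → p ≠ ⊥ →
        (∀ q : Ideal R, q.IsPrime → q < p → q = ⊥) →
        ∀ x : K ⊗[R] M,
          (∃ s : R, s ∉ p ∧ ∃ m₀ : M, algebraMap R K s • x = 1 ⊗ₜ m₀) →
          ∃ s : R, s ∉ p ∧ ∃ n₀ : N, algebraMap R K s • m x = 1 ⊗ₜ n₀) :=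
  stmt7_general R K M N m
end

section
/- Let K be a field of characteristic p > 0 with [K : K^p] = p^r finite, and let κ be a field with K^p ⊆ κ ⊆ K. Let s = Spec κ viewed as a K^p-scheme, with the map Spec K → Spec κ coming from the inclusion κ ⊆ K. Then p^{d} = [K : κ] where d = dim_K Ω, and Ω is the cokernel of the canonical map Ω_{κ/K^p} ⊗_κ K → Ω_{K/K^p}; in particular dim_K Ω = r if and only if κ = K^p. -/
/-!
If `K ^ p ⊆ F ⊆ K` and `x ∉ F`, then `F ⊆ F(x)` has degree `p` and the kernel of
`Ω[K⁄F] → Ω[K⁄F(x)]` is `K · dx`. This kernel is nonzero: for `E ⊇ F` maximal with `x ∉ E`,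
every `y ∉ E` has `x ∈ E(y)`, so `E(y) = E(x)` by comparing degrees and `K = E(x)`; if `dx = 0`
then `Ω[K⁄E] = 0`, making the purely inseparable extension `K/E` separable, i.e. trivial.
Induction on `[K : F]` gives `[K : F] = p ^ dim Ω[K⁄F]`; for `F = κ` this is the claim, as the
cokernel in question is `Ω[K⁄κ]`. The last assertion is the tower law for `K^p ⊆ κ ⊆ K`.
-/

open Module KaehlerDifferential IntermediateField

theorem Derivation.mem_span_image_of_mem_adjoin {R A M : Type*} [CommSemiring R] [CommSemiring A]
    [Algebra R A] [AddCommMonoid M] [Module A M] [Module R M] [IsScalarTower R A M]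
    (D : Derivation R A M) {s : Set A} {a : A} (ha : a ∈ Algebra.adjoin R s) :
    D a ∈ Submodule.span A (D '' s) := by
  induction ha using Algebra.adjoin_induction with
  | mem x hx => exact Submodule.subset_span (Set.mem_image_of_mem D hx)
  | algebraMap r => simp
  | add x y _ _ hx hy => rw [map_add]; exact add_mem hx hy
  | mul x y _ _ hx hy =>
    rw [Derivation.leibniz]
    exact add_mem (Submodule.smul_mem _ _ hy) (Submodule.smul_mem _ _ hx)

section Kaehler

variable (R : Type*) {S : Type*} [CommRing R] [CommRing S] [Algebra R S]

theorem KaehlerDifferential.span_D_image_eq_top {s : Set S} (hs : Algebra.adjoin R s = ⊤) :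
    Submodule.span S (D R S '' s) = ⊤ := by
  rw [eq_top_iff, ← span_range_derivation, Submodule.span_le]
  rintro _ ⟨a, rfl⟩
  exact (D R S).mem_span_image_of_mem_adjoin (hs ▸ Algebra.mem_top)

variable (A B : Type*) [CommRing A] [CommRing B] [Algebra R A] [Algebra A B] [Algebra R B]
  [IsScalarTower R A B]

theorem KaehlerDifferential.range_mapBaseChange_eq_span :
    LinearMap.range (mapBaseChange R A B) =
      Submodule.span B (Set.range fun a : A => D R B (algebraMap A B a)) := by
  have : mapBaseChange R A B = (map R R A B).liftBaseChange B := by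
    ext; simp
  rw [this, LinearMap.range_liftBaseChange, LinearMap.range_eq_map, ← span_range_derivation,
    Submodule.map_span, ← Set.range_comp, Submodule.span_span_of_tower]
  simp only [Function.comp_def, map_D]

theorem KaehlerDifferential.ker_map_eq_span {s : Set B}
    (hs : (IsScalarTower.toAlgHom R A B).range = Algebra.adjoin R s) :
    LinearMap.ker (map R A B B) = Submodule.span B (D R B '' s) := by
  rw [← range_mapBaseChange, range_mapBaseChange_eq_span]
  apply le_antisymm <;> rw [Submodule.span_le]
  · rintro _ ⟨a, rfl⟩
    exact (D R B).mem_span_image_of_mem_adjoin (hs ▸ ⟨a, rfl⟩)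
  · rintro _ ⟨y, hy, rfl⟩
    obtain ⟨a, rfl⟩ : y ∈ (IsScalarTower.toAlgHom R A B).range := hs ▸ Algebra.subset_adjoin hy
    exact Submodule.subset_span ⟨a, rfl⟩

noncomputable def KaehlerDifferential.quotRangeMapBaseChangeEquiv :
    (Ω[B⁄R] ⧸ LinearMap.range (mapBaseChange R A B)) ≃ₗ[B] Ω[B⁄A] :=
  (Submodule.quotEquivOfEq _ _ (range_mapBaseChange R A B)).trans
    ((map R A B B).quotKerEquivOfSurjective (map_surjective R A B))

end Kaehler

section PurelyInseparable

variable {F K : Type*} [Field F] [Field K] [Algebra F K] (p : ℕ)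

theorem IntermediateField.pow_mem_range_algebraMap (E : IntermediateField F K)
    (hK : ∀ y : K, y ^ p ∈ (algebraMap F K).range) (y : K) :
    y ^ p ∈ (algebraMap E K).range :=
  let ⟨a, ha⟩ := hK y
  ⟨algebraMap F E a, ha⟩

theorem IsPurelyInseparable.surjective_algebraMap_of_subsingleton [IsPurelyInseparable F K]
    [FiniteDimensional F K] [Subsingleton Ω[K⁄F]] : Function.Surjective (algebraMap F K) :=
  have : Algebra.FormallyUnramified F K := ⟨inferInstance⟩
  have := (Algebra.FormallyUnramified.iff_isSeparable F K).1 this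
  surjective_algebraMap_of_isSeparable F K

instance IntermediateField.wellFoundedGT [FiniteDimensional F K] :
    WellFoundedGT (IntermediateField F K) :=
  (Subalgebra.toSubmodule.strictMono.comp toSubalgebra_strictMono).wellFoundedGT

variable [ExpChar F p]

theorem IsPurelyInseparable.of_pow_mem (hK : ∀ y : K, y ^ p ∈ (algebraMap F K).range) :
    IsPurelyInseparable F K :=
  (isPurelyInseparable_iff_pow_mem F p).2 fun y => ⟨1, by simpa using hK y⟩

theorem IntermediateField.finrank_adjoin_simple_of_pow_mem [IsPurelyInseparable F K] {x : K}
    (hx : x ∉ (algebraMap F K).range) (hxp : x ^ p ∈ (algebraMap F K).range) :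
    finrank F F⟮x⟯ = p := by
  have hle : IsPurelyInseparable.elemExponent F x ≤ 1 :=
    IsPurelyInseparable.elemExponent_le_of_pow_mem' p (by simpa using hxp)
  have hne : IsPurelyInseparable.elemExponent F x ≠ 0 := fun h => hx <| by
    simpa [h] using IsPurelyInseparable.elemExponent_def' F p x
  rw [adjoin.finrank (IsPurelyInseparable.isIntegral' F x),
    IsPurelyInseparable.minpoly_natDegree_eq' F p,
    show IsPurelyInseparable.elemExponent F x = 1 by omega, pow_one]

theorem IntermediateField.adjoin_simple_eq_top_of_pow_mem
    (hK : ∀ y : K, y ^ p ∈ (algebraMap F K).range) {x : K} (hx : x ∉ (algebraMap F K).range)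
    (hmin : ∀ y : K, y ∉ (algebraMap F K).range → x ∈ F⟮y⟯) : F⟮x⟯ = ⊤ := by
  have := IsPurelyInseparable.of_pow_mem p hK
  refine eq_top_iff.2 fun y _ => ?_
  by_cases hy : y ∈ (algebraMap F K).range
  · obtain ⟨a, rfl⟩ := hy
    exact algebraMap_mem _ a
  have : FiniteDimensional F F⟮y⟯ :=
    adjoin.finiteDimensional (IsPurelyInseparable.isIntegral' F y)
  rw [eq_of_le_of_finrank_eq (adjoin_simple_le_iff.2 (hmin y hy)) (by
    rw [finrank_adjoin_simple_of_pow_mem p hx (hK x),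
      finrank_adjoin_simple_of_pow_mem p hy (hK y)])]
  exact mem_adjoin_simple_self F y

theorem KaehlerDifferential.D_ne_zero_of_pow_mem [FiniteDimensional F K]
    (hK : ∀ y : K, y ^ p ∈ (algebraMap F K).range) {x : K} (hx : x ∉ (algebraMap F K).range) :
    D F K x ≠ 0 := by
  obtain ⟨E, hxE, hEmax⟩ : ∃ E : IntermediateField F K, x ∉ E ∧ ∀ E', E < E' → x ∈ E' := by
    obtain ⟨E, hE⟩ := WellFoundedGT.exists_maximal inferInstance {E | x ∉ E}
      ⟨⊥, fun h => hx (mem_bot.1 h)⟩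
    exact ⟨E, hE.prop, fun E' hlt => by_contra fun h => hE.not_gt h hlt⟩
  have := expChar_of_injective_algebraMap (algebraMap F E).injective p
  have hKE := E.pow_mem_range_algebraMap p hK
  have hxE' : x ∉ (algebraMap E K).range := fun ⟨e, he⟩ => hxE (he ▸ e.2)
  have htop : E⟮x⟯ = ⊤ := adjoin_simple_eq_top_of_pow_mem p hKE hxE' fun y hy =>
    hEmax (E⟮y⟯.restrictScalars F) (SetLike.lt_iff_le_and_exists.2
      ⟨fun z hz => IntermediateField.algebraMap_mem E⟮y⟯ ⟨z, hz⟩, y, mem_adjoin_simple_self E y,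
        fun h => hy ⟨⟨y, h⟩, rfl⟩⟩)
  have hspan : Submodule.span K {D E K x} = ⊤ := by
    rw [← Set.image_singleton]
    exact span_D_image_eq_top E ((adjoin_simple_eq_top_iff_of_isAlgebraic
      (Algebra.IsAlgebraic.isAlgebraic x)).1 htop)
  intro h0
  have hD : D E K x = 0 := by simpa [h0] using (map_D F E K K x).symm
  have : Subsingleton Ω[K⁄E] := by
    rw [hD, Submodule.span_zero_singleton] at hspan
    exact (Submodule.subsingleton_iff K).1 (subsingleton_of_bot_eq_top hspan)
  have := IsPurelyInseparable.of_pow_mem p hKE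
  exact hxE' (IsPurelyInseparable.surjective_algebraMap_of_subsingleton x)

end PurelyInseparable

universe u

-- `F` and `K` share a universe because the induction replaces `F` by `F⟮x⟯ : Type u`.
theorem finrank_eq_pow_finrank_kaehlerDifferential {F K : Type u} [Field F] [Field K]
    [Algebra F K] (p : ℕ) [ExpChar F p] [FiniteDimensional F K]
    (hK : ∀ y : K, y ^ p ∈ (algebraMap F K).range) :
    finrank F K = p ^ finrank K Ω[K⁄F] := by
  induction hn : finrank F K using Nat.strong_induction_on generalizing F with
  | _ n ih =>
  have := IsPurelyInseparable.of_pow_mem p hK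
  by_cases hsurj : Function.Surjective (algebraMap F K)
  · have := subsingleton_of_surjective F K hsurj
    rw [← hn, finrank_zero_of_subsingleton (M := Ω[K⁄F]), pow_zero,
      finrank_of_bijective_algebraMap ⟨(algebraMap F K).injective, hsurj⟩]
  obtain ⟨x, hx⟩ := not_forall.1 hsurj
  have hdeg : finrank F F⟮x⟯ = p := finrank_adjoin_simple_of_pow_mem p hx (hK x)
  have := expChar_of_injective_algebraMap (algebraMap F F⟮x⟯).injective p
  have hker : LinearMap.ker (map F F⟮x⟯ K K) = K ∙ D F K x := by
    rw [← Set.image_singleton]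
    refine ker_map_eq_span F F⟮x⟯ K ?_
    rw [← adjoin_simple_toSubalgebra_of_isAlgebraic (Algebra.IsAlgebraic.isAlgebraic x)]
    exact F⟮x⟯.range_val
  have hΩ : finrank K Ω[K⁄F] = finrank K Ω[K⁄F⟮x⟯] + 1 := by
    rw [← (map F F⟮x⟯ K K).finrank_range_add_finrank_ker, LinearMap.range_eq_top.2
      (map_surjective F F⟮x⟯ K), finrank_top, hker, finrank_span_singleton
      (D_ne_zero_of_pow_mem p hK hx)]
  have hlt : finrank F⟮x⟯ K < n := by
    rw [← hn, ← finrank_mul_finrank F F⟮x⟯ K, hdeg]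
    refine lt_mul_left finrank_pos (hdeg ▸ lt_of_le_of_ne finrank_pos fun h => hx ?_)
    exact mem_bot.1 (finrank_adjoin_simple_eq_one_iff.1 h.symm)
  rw [← hn, ← finrank_mul_finrank F F⟮x⟯ K, hdeg,
    ih _ hlt (F⟮x⟯.pow_mem_range_algebraMap p hK) rfl, hΩ, pow_succ']

theorem Subfield.eq_of_le_of_finrank_eq {L : Type*} [Field L] {A B : Subfield L} (hAB : A ≤ B)
    [FiniteDimensional A L] (h : finrank A L = finrank B L) : B = A := by
  let := (Subfield.inclusion hAB).toAlgebra
  have : IsScalarTower A B L := .of_algebraMap_eq fun _ => rfl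
  have : FiniteDimensional A B := .left A B L
  have : FiniteDimensional B L := .right A B L
  have hAB1 : finrank A B = 1 := by
    have := finrank_mul_finrank A B L
    rw [h] at this
    exact (Nat.mul_eq_right finrank_pos.ne').1 this
  refine le_antisymm (fun y hy => ?_) hAB
  obtain ⟨a, ha⟩ := (Algebra.finrank_eq_one_iff_bijective_algebraMap.1 hAB1).2 ⟨y, hy⟩
  rw [← show (a : L) = y from congrArg Subtype.val ha]
  exact a.2

/-- Let `K` be a field of characteristic `p > 0` with `[K : K^p] = p^r` finite, and let
`κ` be an intermediate field `K^p ⊆ κ ⊆ K`.  Let `Ω` be the cokernel of the canonical map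
`Ω_{κ/K^p} ⊗_κ K → Ω_{K/K^p}` and `d = dim_K Ω`.  Then `p^d = [K : κ]`, and `d = r` if and
only if `κ = K^p`. -/
theorem stmt11 (p r : ℕ) [Fact p.Prime] (K : Type*) [Field K] [CharP K p]
    (κ : Subfield K) (hκ : (frobenius K p).fieldRange ≤ κ)
    (hfin : FiniteDimensional (↥(frobenius K p).fieldRange) K)
    (hr : Module.finrank (↥(frobenius K p).fieldRange) K = p ^ r) :
    letI : Algebra ↥(frobenius K p).fieldRange ↥κ := (Subfield.inclusion hκ).toAlgebra
    letI : IsScalarTower ↥(frobenius K p).fieldRange ↥κ K :=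
      IsScalarTower.of_algebraMap_eq fun x => rfl
    ∀ d : ℕ, d = Module.finrank K
        ((KaehlerDifferential ↥(frobenius K p).fieldRange K) ⧸
          LinearMap.range (KaehlerDifferential.mapBaseChange ↥(frobenius K p).fieldRange ↥κ K)) →
      p ^ d = Module.finrank ↥κ K ∧ (d = r ↔ κ = (frobenius K p).fieldRange) := by
  let _ : Algebra (frobenius K p).fieldRange κ := (Subfield.inclusion hκ).toAlgebra
  have : IsScalarTower (frobenius K p).fieldRange κ K := .of_algebraMap_eq fun _ => rfl
  intro d hd
  have : FiniteDimensional κ K := .right (frobenius K p).fieldRange κ K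
  have hpow : ∀ y : K, y ^ p ∈ (algebraMap κ K).range := fun y => ⟨⟨y ^ p, hκ ⟨y, rfl⟩⟩, rfl⟩
  have hdeg : p ^ d = finrank κ K := by
    rw [hd, (quotRangeMapBaseChangeEquiv _ κ K).finrank_eq,
      finrank_eq_pow_finrank_kaehlerDifferential p hpow]
  refine ⟨hdeg, fun hdr => Subfield.eq_of_le_of_finrank_eq hκ (by rw [hr, ← hdeg, hdr]), ?_⟩
  rintro rfl
  exact Nat.pow_right_injective (Fact.out : p.Prime).two_le (hdeg.trans hr)
end
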